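/- arXiv:1707.00523 — 2 statements merged into one kernel-verified Lean document; each statement's English description precedes it below -/
import Mathlib

section
/- For all real λ > 0, β > 0, t ≥ 0: ∫₀^∞ u · λ e^{-λ u - β t} I₀(2√(λ β u t)) du = (β t + 1)/λ, and ∫₀^∞ u² · λ e^{-λ u - β t} I₀(2√(λ β u t)) du = (β² t² + 4 β t + 2)/λ². -/
open Real MeasureTheory Filter Finset

/-- Wright function `Φ(ρ, δ, z) = Σ_{j≥0} z^j / (j! Γ(ρ j + δ))`. -/
noncomputable def wright (ρ δ z : ℝ) : ℝ :=
  ∑' j : ℕ, z ^ j / ((Nat.factorial j : ℝ) * Real.Gamma (ρ * (j : ℝ) + δ))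

/-- Wright function with second parameter 0:
`Φ(ρ, 0, z) = Σ_{j≥1} z^j / (j! Γ(ρ j))`. -/
noncomputable def wright0 (ρ z : ℝ) : ℝ :=
  ∑' j : ℕ, z ^ (j + 1) /
    ((Nat.factorial (j + 1) : ℝ) * Real.Gamma (ρ * ((j : ℝ) + 1)))

/-- Two-parameter Mittag-Leffler function `E_{ρ,δ}(z) = Σ_{j≥0} z^j / Γ(ρ j + δ)`. -/
noncomputable def ml2 (ρ δ z : ℝ) : ℝ :=
  ∑' j : ℕ, z ^ j / Real.Gamma (ρ * (j : ℝ) + δ)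

/-- Three-parameter generalized Mittag-Leffler function
`E^γ_{ρ,δ}(z) = Σ_{j≥0} (Γ(γ+j)/Γ(γ)) z^j / (j! Γ(ρ j + δ))`. -/
noncomputable def ml3 (γ ρ δ z : ℝ) : ℝ :=
  ∑' j : ℕ, (Real.Gamma (γ + (j : ℝ)) / Real.Gamma γ) * z ^ j /
    ((Nat.factorial j : ℝ) * Real.Gamma (ρ * (j : ℝ) + δ))

/-- Modified Bessel function of the first kind of order 0:
`I₀(z) = Σ_{j≥0} (z/2)^{2j} / (j!)²`. -/
noncomputable def besselI0 (z : ℝ) : ℝ :=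
  ∑' j : ℕ, (z / 2) ^ (2 * j) / ((Nat.factorial j : ℝ) * (Nat.factorial j : ℝ))

open scoped Nat

/-!
Expanding `I₀(2√(a u)) = Σ_j (a u)^j / (j!)²` and integrating term by term against the Gamma
integrals `∫₀^∞ u^n e^{-c u} du = n! / c^{n+1}` gives
`∫₀^∞ u^k h(u,t) du = e^{-βt} λ^{-k} Σ_j (j+k)! / (j!)² (βt)^j`. Writing `(j+1)` and
`(j+1)(j+2)` in the falling-factorial basis `j^{(m)}` and using `Σ_j j^{(m)} x^j / j! = x^m e^x`
evaluates these series as `(x+1) e^x` and `(x² + 4x + 2) e^x`.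
-/

theorem hasSum_descFactorial_mul_pow_div_factorial (k : ℕ) (x : ℝ) :
    HasSum (fun n : ℕ => (n.descFactorial k : ℝ) * x ^ n / n !) (x ^ k * exp x) := by
  have hlow : ∑ i ∈ range k, (i.descFactorial k : ℝ) * x ^ i / i ! = 0 :=
    sum_eq_zero fun i hi => by simp [Nat.descFactorial_of_lt (mem_range.mp hi)]
  rw [← hasSum_nat_add_iff' k, hlow, sub_zero, exp_eq_exp_ℝ]
  refine ((NormedSpace.expSeries_div_hasSum_exp x).mul_left (x ^ k)).congr_fun fun n => ?_
  have hfac := Nat.factorial_mul_descFactorial (Nat.le_add_left k n)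
  rw [Nat.add_sub_cancel] at hfac
  rw [← hfac, pow_add]
  push_cast
  field_simp

theorem summable_factorial_add_div_mul_pow (k : ℕ) {x : ℝ} (hx : 0 ≤ x) :
    Summable fun j : ℕ => ((j + k)! : ℝ) / (j ! * j !) * x ^ j := by
  refine Summable.of_nonneg_of_le (fun j => by positivity) (fun j => ?_)
    ((summable_pow_div_factorial (2 * x)).mul_left (2 ^ k * k ! : ℝ))
  have hchoose : ((j + k).choose k : ℝ) ≤ 2 ^ (j + k) := mod_cast Nat.choose_le_two_pow _ _
  rw [← Nat.add_choose_mul_factorial_mul_factorial]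
  push_cast
  calc ((j + k).choose k : ℝ) * j ! * k ! / (j ! * j !) * x ^ j
      = (j + k).choose k * k ! * x ^ j / j ! := by field_simp
    _ ≤ 2 ^ (j + k) * k ! * x ^ j / j ! := by gcongr
    _ = 2 ^ k * k ! * ((2 * x) ^ j / j !) := by ring

theorem integral_pow_mul_exp_neg_mul_Ioi (n : ℕ) {c : ℝ} (hc : 0 < c) :
    ∫ u in Set.Ioi 0, u ^ n * exp (-(c * u)) = n ! / c ^ (n + 1) := by
  have h := integral_rpow_mul_exp_neg_mul_Ioi (a := n + 1) (by positivity) hc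
  rw [add_sub_cancel_right, Gamma_nat_eq_factorial] at h
  simp only [rpow_natCast] at h
  rw [h, ← Nat.cast_succ, rpow_natCast, one_div_pow, one_div_mul_eq_div]

theorem integrableOn_pow_mul_exp_neg_mul_Ioi (n : ℕ) {c : ℝ} (hc : 0 < c) :
    IntegrableOn (fun u : ℝ => u ^ n * exp (-(c * u))) (Set.Ioi 0) := by
  simpa [rpow_natCast] using integrableOn_rpow_mul_exp_neg_mul_rpow
    (s := n) (p := 1) (neg_one_lt_zero.trans_le n.cast_nonneg) one_pos hc

theorem besselI0_two_mul_sqrt {y : ℝ} (hy : 0 ≤ y) :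
    besselI0 (2 * √y) = ∑' j : ℕ, y ^ j / (j ! * j !) := by
  refine tsum_congr fun j => ?_
  rw [mul_div_cancel_left₀ _ two_ne_zero, pow_mul, sq_sqrt hy]

theorem integral_pow_mul_exp_neg_mul_mul_besselI0 (k : ℕ) {a c : ℝ} (ha : 0 ≤ a) (hc : 0 < c) :
    ∫ u in Set.Ioi 0, u ^ k * (exp (-(c * u)) * besselI0 (2 * √(a * u)))
      = (∑' j : ℕ, ((j + k)! : ℝ) / (j ! * j !) * (a / c) ^ j) / c ^ (k + 1) := by
  set F : ℕ → ℝ → ℝ := fun j u => a ^ j / (j ! * j !) * (u ^ (j + k) * exp (-(c * u)))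
  have hF_nonneg (j : ℕ) (u : ℝ) (hu : u ∈ Set.Ioi 0) : 0 ≤ F j u := by
    have : 0 < u := hu
    positivity
  have hF_int (j : ℕ) : IntegrableOn (F j) (Set.Ioi 0) :=
    (integrableOn_pow_mul_exp_neg_mul_Ioi (j + k) hc).const_mul _
  have hF_integral (j : ℕ) : ∫ u in Set.Ioi 0, F j u
      = ((j + k)! : ℝ) / (j ! * j !) * (a / c) ^ j / c ^ (k + 1) := by
    simp only [F]
    rw [integral_const_mul, integral_pow_mul_exp_neg_mul_Ioi _ hc, div_pow]
    field_simp
    ring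
  have hF_norm (j : ℕ) : ∫ u in Set.Ioi 0, ‖F j u‖ = ∫ u in Set.Ioi 0, F j u :=
    setIntegral_congr_fun measurableSet_Ioi fun u hu => norm_of_nonneg (hF_nonneg j u hu)
  have hsum : ∀ u ∈ Set.Ioi (0 : ℝ),
      u ^ k * (exp (-(c * u)) * besselI0 (2 * √(a * u))) = ∑' j, F j u := by
    intro u hu
    rw [besselI0_two_mul_sqrt (mul_nonneg ha (le_of_lt hu)), ← tsum_mul_left,
      ← tsum_mul_left]
    congr 1 with j
    simp only [F]
    ring
  have hsummable : Summable fun j => ∫ u in Set.Ioi 0, ‖F j u‖ := by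
    simp_rw [hF_norm, hF_integral]
    exact (summable_factorial_add_div_mul_pow k (div_nonneg ha hc.le)).div_const _
  have hterms := hasSum_integral_of_summable_integral_norm hF_int hsummable
  rw [setIntegral_congr_fun measurableSet_Ioi hsum, ← hterms.tsum_eq, tsum_congr hF_integral,
    tsum_div_const]

theorem hasSum_factorial_add_one_div_mul_pow (x : ℝ) :
    HasSum (fun j : ℕ => ((j + 1)! : ℝ) / (j ! * j !) * x ^ j) ((x + 1) * exp x) := by
  convert (hasSum_descFactorial_mul_pow_div_factorial 1 x).add
    (hasSum_descFactorial_mul_pow_div_factorial 0 x) using 1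
  · funext j
    simp only [Nat.factorial_succ, Nat.descFactorial_one, Nat.descFactorial_zero]
    push_cast
    field_simp
  · ring

theorem hasSum_factorial_add_two_div_mul_pow (x : ℝ) :
    HasSum (fun j : ℕ => ((j + 2)! : ℝ) / (j ! * j !) * x ^ j)
      ((x ^ 2 + 4 * x + 2) * exp x) := by
  convert ((hasSum_descFactorial_mul_pow_div_factorial 2 x).add
    ((hasSum_descFactorial_mul_pow_div_factorial 1 x).mul_left 4)).add
    ((hasSum_descFactorial_mul_pow_div_factorial 0 x).mul_left 2) using 1
  · funext j
    simp only [Nat.factorial_succ, Nat.cast_descFactorial_two, Nat.descFactorial_one,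
      Nat.descFactorial_zero]
    push_cast
    field_simp
    ring
  · ring

noncomputable def firstPassageDensity (lam β t u : ℝ) : ℝ :=
  lam * exp (-(lam * u) - β * t) * besselI0 (2 * √(lam * β * u * t))

theorem integral_pow_mul_firstPassageDensity (k : ℕ) {lam β t : ℝ} (hlam : 0 < lam)
    (hβt : 0 ≤ β * t) :
    ∫ u in Set.Ioi 0, u ^ k * firstPassageDensity lam β t u
      = exp (-(β * t)) / lam ^ k * ∑' j : ℕ, ((j + k)! : ℝ) / (j ! * j !) * (β * t) ^ j := by
  have hintegrand (u : ℝ) : u ^ k * firstPassageDensity lam β t u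
      = lam * exp (-(β * t)) * (u ^ k * (exp (-(lam * u)) *
        besselI0 (2 * √(lam * (β * t) * u)))) := by
    rw [firstPassageDensity, sub_eq_add_neg, exp_add]
    ring_nf
  simp_rw [hintegrand]
  rw [integral_const_mul, integral_pow_mul_exp_neg_mul_mul_besselI0 k (by positivity) hlam,
    mul_div_cancel_left₀ _ hlam.ne']
  field_simp
  ring

/-- first and second moments of the inverse compound
Poisson-exponential process `Y(t)`. -/
theorem stmt6 (lam β t : ℝ) (hlam : 0 < lam) (hβ : 0 < β) (ht : 0 ≤ t) :
    (∫ u in Set.Ioi (0 : ℝ),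
      u * (lam * Real.exp (-(lam * u) - β * t) *
        besselI0 (2 * Real.sqrt (lam * β * u * t))))
      = (β * t + 1) / lam ∧
    (∫ u in Set.Ioi (0 : ℝ),
      u ^ 2 * (lam * Real.exp (-(lam * u) - β * t) *
        besselI0 (2 * Real.sqrt (lam * β * u * t))))
      = (β ^ 2 * t ^ 2 + 4 * β * t + 2) / lam ^ 2 := by
  have hβt : 0 ≤ β * t := by positivity
  have hmoment (k : ℕ) := integral_pow_mul_firstPassageDensity k hlam hβt
  simp only [firstPassageDensity] at hmoment
  constructor
  · have hmean := hmoment 1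
    simp only [pow_one] at hmean
    rw [hmean, (hasSum_factorial_add_one_div_mul_pow _).tsum_eq, exp_neg]
    field_simp
  · rw [hmoment 2, (hasSum_factorial_add_two_div_mul_pow _).tsum_eq, exp_neg]
    field_simp
end

section
/- For all real λ > 0, β > 0, t ≥ 0, every integer n ≥ 1 and every real v > -λ, ∫₀^∞ e^{-v s} · λ e^{-β t - λ s} Σ_{k=1}^{n} (β t)^{k-1} Φ(n, k, λ s (β t)^n) ds = e^{-β t} · (λ/(λ + v)) · Σ_{k=1}^{n} (β t)^{k-1} E_{n,k}(λ (β t)^n/(λ + v)). -/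
/-
Expanding `Φ(n, k, a s) = Σ_j (a s)^j / (j! Γ(n j + k))` and integrating term by term against
`e^{-b s}` with `∫₀^∞ s^j e^{-b s} ds = j! / b^{j+1}`, the factorials cancel and what remains is
`b⁻¹ Σ_j (a/b)^j / Γ(n j + k) = b⁻¹ E_{n,k}(a/b)`. The interchange is justified by absolute
convergence: the integrals of the absolute values form the same series with `|a|`, which converges
because `Γ(n j + k) ≥ j!` for `n, k ≥ 1`. The theorem is this identity for `a = λ (β t)^n` and
`b = λ + v`, summed over `k`.
-/

open Real MeasureTheory Filter Finset

open Set
open scoped Nat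

theorem MeasureTheory.integrable_tsum_of_summable_integral_norm {α E ι : Type*}
    [MeasurableSpace α] {μ : Measure α} [NormedAddCommGroup E] [CompleteSpace E] [Countable ι]
    {F : ι → α → E} (hF_int : ∀ i, Integrable (F i) μ)
    (hF_sum : Summable fun i ↦ ∫ a, ‖F i a‖ ∂μ) :
    Integrable (fun a ↦ ∑' i, F i a) μ := by
  refine ⟨.tsum fun i ↦ (hF_int i).1, ?_⟩
  calc ∫⁻ a, ‖∑' i, F i a‖ₑ ∂μ ≤ ∫⁻ a, ∑' i, ‖F i a‖ₑ ∂μ :=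
        lintegral_mono fun _ ↦ enorm_tsum_le_tsum_enorm
    _ = ∑' i, ENNReal.ofReal (∫ a, ‖F i a‖ ∂μ) := by
        rw [lintegral_tsum fun i ↦ (hF_int i).1.enorm]
        exact tsum_congr fun i ↦ (ofReal_integral_norm_eq_lintegral_enorm (hF_int i)).symm
    _ < ⊤ := by
        rw [← ENNReal.ofReal_tsum_of_nonneg (fun i ↦ integral_nonneg fun _ ↦ norm_nonneg _) hF_sum]
        exact ENNReal.ofReal_lt_top

lemma factorial_le_Gamma_natCast_mul_add {n k : ℕ} (hn : 1 ≤ n) (hk : 1 ≤ k) (j : ℕ) :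
    (j ! : ℝ) ≤ Gamma (n * j + k) := by
  obtain ⟨k, rfl⟩ := Nat.exists_eq_add_of_le' hk
  have hΓ : Gamma (n * j + (k + 1 : ℕ)) = (n * j + k)! := by
    rw [← Gamma_nat_eq_factorial]; push_cast; ring_nf
  rw [hΓ]
  exact_mod_cast Nat.factorial_le (by nlinarith)

lemma summable_ml2_series {n k : ℕ} (hn : 1 ≤ n) (hk : 1 ≤ k) (x : ℝ) :
    Summable fun j : ℕ ↦ x ^ j / Gamma (n * j + k) := by
  refine .of_norm_bounded (Real.summable_pow_div_factorial |x|) fun j ↦ ?_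
  have hj : (0 : ℝ) < j ! := by positivity
  rw [norm_div, norm_pow, Real.norm_eq_abs,
    Real.norm_of_nonneg (hj.trans_le (factorial_le_Gamma_natCast_mul_add hn hk j)).le]
  gcongr
  exact factorial_le_Gamma_natCast_mul_add hn hk j

lemma integral_pow_mul_exp_neg_mul_Ioi_s15 {b : ℝ} (hb : 0 < b) (j : ℕ) :
    ∫ s in Ioi (0 : ℝ), s ^ j * exp (-(b * s)) = j ! / b ^ (j + 1) := by
  have h := integral_rpow_mul_exp_neg_mul_Ioi (a := j + 1) (by positivity) hb
  simp only [add_sub_cancel_right, rpow_natCast, Gamma_nat_eq_factorial] at h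
  rw [h, ← Nat.cast_succ, rpow_natCast, one_div, inv_pow, inv_mul_eq_div]

section WrightLaplace

variable (n k : ℕ) (a b : ℝ)

noncomputable def wrightLaplaceTerm (j : ℕ) (s : ℝ) : ℝ :=
  a ^ j / (j ! * Gamma (n * j + k)) * (s ^ j * exp (-(b * s)))

lemma exp_mul_wright_eq_tsum (s : ℝ) :
    exp (-(b * s)) * wright n k (a * s) = ∑' j, wrightLaplaceTerm n k a b j s := by
  rw [wright, ← tsum_mul_left]
  refine tsum_congr fun j ↦ ?_
  rw [wrightLaplaceTerm, mul_pow]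
  ring

variable {b}

lemma integrableOn_wrightLaplaceTerm (hb : 0 < b) (j : ℕ) :
    IntegrableOn (wrightLaplaceTerm n k a b j) (Ioi 0) := by
  refine .const_mul ?_ _
  refine (integrableOn_rpow_mul_exp_neg_mul_rpow (p := 1) (s := j) (neg_one_lt_zero.trans_le j.cast_nonneg)
    zero_lt_one hb).congr_fun (fun s _ ↦ ?_) measurableSet_Ioi
  simp [rpow_natCast]

lemma integral_wrightLaplaceTerm (hb : 0 < b) (j : ℕ) :
    ∫ s in Ioi 0, wrightLaplaceTerm n k a b j s = b⁻¹ * ((a / b) ^ j / Gamma (n * j + k)) := by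
  simp only [wrightLaplaceTerm]
  rw [integral_const_mul, integral_pow_mul_exp_neg_mul_Ioi_s15 hb, div_pow]
  field_simp
  ring

lemma norm_wrightLaplaceTerm (hk : 1 ≤ k) (j : ℕ) {s : ℝ} (hs : 0 ≤ s) :
    ‖wrightLaplaceTerm n k a b j s‖ = wrightLaplaceTerm n k |a| b j s := by
  have hΓ : 0 < Gamma (n * j + k) := Gamma_pos_of_pos (by
    have : (1 : ℝ) ≤ k := by exact_mod_cast hk
    positivity)
  simp only [wrightLaplaceTerm, norm_mul, norm_div, norm_pow, Real.norm_eq_abs, abs_of_nonneg hs,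
    abs_of_pos hΓ, abs_of_pos (exp_pos _), Nat.abs_cast]

variable {n k}

lemma summable_integral_norm_wrightLaplaceTerm (hn : 1 ≤ n) (hk : 1 ≤ k) (hb : 0 < b) :
    Summable fun j ↦ ∫ s in Ioi 0, ‖wrightLaplaceTerm n k a b j s‖ := by
  have hnorm (j : ℕ) : ∫ s in Ioi 0, ‖wrightLaplaceTerm n k a b j s‖ =
      b⁻¹ * ((|a| / b) ^ j / Gamma (n * j + k)) := by
    rw [setIntegral_congr_fun measurableSet_Ioi
      fun s hs ↦ norm_wrightLaplaceTerm n k a hk j (le_of_lt hs), integral_wrightLaplaceTerm n k _ hb]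
  simp_rw [hnorm]
  exact (summable_ml2_series hn hk _).mul_left _

theorem integrableOn_exp_mul_wright (hn : 1 ≤ n) (hk : 1 ≤ k) (hb : 0 < b) :
    IntegrableOn (fun s ↦ exp (-(b * s)) * wright n k (a * s)) (Ioi 0) := by
  simp_rw [exp_mul_wright_eq_tsum n k a b]
  exact integrable_tsum_of_summable_integral_norm (integrableOn_wrightLaplaceTerm n k a hb)
    (summable_integral_norm_wrightLaplaceTerm a hn hk hb)

theorem integral_exp_mul_wright (hn : 1 ≤ n) (hk : 1 ≤ k) (hb : 0 < b) :
    ∫ s in Ioi 0, exp (-(b * s)) * wright n k (a * s) = b⁻¹ * ml2 n k (a / b) := by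
  simp_rw [exp_mul_wright_eq_tsum n k a b]
  rw [← integral_tsum_of_summable_integral_norm (integrableOn_wrightLaplaceTerm n k a hb)
    (summable_integral_norm_wrightLaplaceTerm a hn hk hb)]
  simp_rw [integral_wrightLaplaceTerm n k a hb, tsum_mul_left, ml2]

end WrightLaplace

theorem stmt15_general (lam β t : ℝ) (n : ℕ) (hn : 1 ≤ n) (v : ℝ) (hv : -lam < v) :
    (∫ s in Set.Ioi (0 : ℝ),
      Real.exp (-(v * s)) *
        (lam * Real.exp (-(β * t) - lam * s) *
          ∑ k ∈ Finset.Icc 1 n,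
            (β * t) ^ (k - 1) * wright (n : ℝ) (k : ℝ) (lam * s * (β * t) ^ n)))
    = Real.exp (-(β * t)) * (lam / (lam + v)) *
        ∑ k ∈ Finset.Icc 1 n,
          (β * t) ^ (k - 1) * ml2 (n : ℝ) (k : ℝ) (lam * (β * t) ^ n / (lam + v)) := by
  have hb : 0 < lam + v := by linarith
  have hintegrand (s : ℝ) : exp (-(v * s)) * (lam * exp (-(β * t) - lam * s) *
      ∑ k ∈ Finset.Icc 1 n, (β * t) ^ (k - 1) * wright n k (lam * s * (β * t) ^ n)) =
      exp (-(β * t)) * lam * ∑ k ∈ Finset.Icc 1 n, (β * t) ^ (k - 1) *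
        (exp (-((lam + v) * s)) * wright n k (lam * (β * t) ^ n * s)) := by
    have hexp : exp (-(v * s)) * exp (-(β * t) - lam * s) =
        exp (-(β * t)) * exp (-((lam + v) * s)) := by
      rw [← exp_add, ← exp_add]; ring_nf
    rw [show lam * s * (β * t) ^ n = lam * (β * t) ^ n * s by ring, mul_sum, mul_sum, mul_sum]
    refine sum_congr rfl fun k _ ↦ ?_
    linear_combination lam * (β * t) ^ (k - 1) * wright n k (lam * (β * t) ^ n * s) * hexp
  have hk {k : ℕ} (hk : k ∈ Finset.Icc 1 n) : 1 ≤ k := (Finset.mem_Icc.mp hk).1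
  simp_rw [hintegrand]
  rw [integral_const_mul, integral_finsetSum _ fun k hkn ↦
    (integrableOn_exp_mul_wright _ hn (hk hkn) hb).const_mul _]
  simp only [integral_const_mul, mul_sum]
  refine sum_congr rfl fun k hkn ↦ ?_
  rw [integral_exp_mul_wright _ hn (hk hkn) hb, div_eq_mul_inv lam]
  ring

/-- Laplace transform of the inverse compound Poisson–Erlang
process `Y^{(n)}(t)`. -/
theorem stmt15 (lam β t : ℝ) (hlam : 0 < lam) (hβ : 0 < β) (ht : 0 ≤ t)
    (n : ℕ) (hn : 1 ≤ n) (v : ℝ) (hv : -lam < v) :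
    (∫ s in Set.Ioi (0 : ℝ),
      Real.exp (-(v * s)) *
        (lam * Real.exp (-(β * t) - lam * s) *
          ∑ k ∈ Finset.Icc 1 n,
            (β * t) ^ (k - 1) * wright (n : ℝ) (k : ℝ) (lam * s * (β * t) ^ n)))
    = Real.exp (-(β * t)) * (lam / (lam + v)) *
        ∑ k ∈ Finset.Icc 1 n,
          (β * t) ^ (k - 1) * ml2 (n : ℝ) (k : ℝ) (lam * (β * t) ^ n / (lam + v)) :=
  stmt15_general lam β t n hn v hv
end
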